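/- arXiv:1812.00690 — 3 statements merged into one kernel-verified Lean document; each statement's English description precedes it below -/
import Mathlib

section
/- Conversely, if P_X is an M×M stochastic matrix and there exists a substochastic matrix P'_Z with P_X C = C (P'_Z)ᵀ (where C(i,j) = 1{i ≤ j}), then P_X is stochastically monotone: for all i₁ ≤ i₂ and all j, P_X(i₂, {1,…,j}) ≤ P_X(i₁, {1,…,j}). -/
open Matrix

/-- Converse: if a stochastic matrix `P_X` admits a substochastic Siegmund dual `P'_Z`
(i.e. `P_X C = C (P'_Z)ᵀ` with `C(i,j) = 1{i ≤ j}`), then `P_X` is stochastically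
monotone. -/
theorem siegmund_dual_implies_monotone (M : ℕ)
    (PX : Matrix (Fin M) (Fin M) ℝ)
    (hnonneg : ∀ i j, 0 ≤ PX i j)
    (hrow : ∀ i, ∑ j, PX i j = 1)
    (PZ : Matrix (Fin M) (Fin M) ℝ)
    (hPZnonneg : ∀ j i, 0 ≤ PZ j i)
    (hPZrow : ∀ j, ∑ i, PZ j i ≤ 1)
    (C : Matrix (Fin M) (Fin M) ℝ)
    (hC : ∀ i j : Fin M, C i j = if i ≤ j then 1 else 0)
    (hdual : PX * C = C * PZᵀ) :
    ∀ i₁ i₂ : Fin M, i₁ ≤ i₂ → ∀ j : Fin M,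
      ∑ k ∈ Finset.Iic j, PX i₂ k ≤ ∑ k ∈ Finset.Iic j, PX i₁ k := by
  intro i₁ i₂ h j
  have key : ∀ i : Fin M, ∑ k ∈ Finset.Iic j, PX i k = ∑ k ∈ Finset.Ici i, PZ j k := by
    intro i
    have h1 : (PX * C) i j = (C * PZᵀ) i j := by rw [hdual]
    have h2 : (PX * C) i j = ∑ k ∈ Finset.Iic j, PX i k := by
      simp only [Matrix.mul_apply, hC, mul_ite, mul_one, mul_zero]
      rw [show Finset.Iic j = Finset.univ.filter (· ≤ j) by ext k; simp,
        Finset.sum_filter]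
    have h3 : (C * PZᵀ) i j = ∑ k ∈ Finset.Ici i, PZ j k := by
      simp only [Matrix.mul_apply, hC, Matrix.transpose_apply, ite_mul, one_mul, zero_mul]
      rw [show Finset.Ici i = Finset.univ.filter (i ≤ ·) by ext k; simp,
        Finset.sum_filter]
    rw [← h1, h2] at h3
    rw [h3]
  rw [key i₁, key i₂]
  exact Finset.sum_le_sum_of_subset_of_nonneg (Finset.Ici_subset_Ici.2 h)
    (fun k _ _ => hPZnonneg j k)
end

section
/- Let X* be a Markov chain on state space E* = {e₀*} ∪ Ê with two absorbing states e₀* and e_M*, initial distribution ν*, and transition matrix P_{X*}; let X̂ be a Markov chain on Ê with one absorbing state ê_M and transition matrix P_{X̂}. Suppose Λ is a nonsingular matrix that intertwines the restricted matrix P'_{X*} (P_{X*} with the row and column of e₀* removed) and P_{X̂}, i.e. Λ P'_{X*} = P_{X̂} Λ, and Λ is e_M*-isolated, meaning Λ(ê, e_M*) ≠ 0 iff ê = ê_M. Let ν̂ = ν* Λ⁻¹. Then for all t ≥ 0, the absorption probability satisfies P(T*_{ν*, e_M*} ≤ t) = Λ(ê_M, e_M*) · Σ_{ê ∈ Ê}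 ν̂(ê) P_{X̂}^t(ê, ê_M). -/
open Matrix

/-- Intertwining lemma for absorption probabilities. The restricted state space `Ê` is
`Fin M`; `eM` plays the role of both the absorbing state `e_M*` of `X*` (within the
restricted matrix `P'_{X*}`) and the absorbing state `e_M` of `X̂`. If
`Λ P'_{X*} = P_{X̂} Λ` with `Λ` nonsingular and `e_M*`-isolated, and `ν̂ = ν* Λ⁻¹`, then
for all `t ≥ 0`: `P(T*_{ν*,e_M*} ≤ t) = Λ(e_M,e_M*) · Σ_e ν̂(e) P_{X̂}^t(e, e_M)`. -/
theorem intertwining_absorption (M : ℕ) (eM : Fin M)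
    (Pstar Phat Λ : Matrix (Fin M) (Fin M) ℝ)
    -- `P'_{X*}` is the substochastic restriction of a stochastic matrix
    (hPstar_nonneg : ∀ i j, 0 ≤ Pstar i j)
    (hPstar_row : ∀ i, ∑ j, Pstar i j ≤ 1)
    -- `e_M*` is absorbing for `X*`
    (hPstar_abs : ∀ j, Pstar eM j = if j = eM then 1 else 0)
    -- `P_{X̂}` is stochastic with unique absorbing state `e_M`
    (hPhat_nonneg : ∀ i j, 0 ≤ Phat i j)
    (hPhat_row : ∀ i, ∑ j, Phat i j = 1)
    (hPhat_abs : ∀ j, Phat eM j = if j = eM then 1 else 0)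
    -- `Λ` is a nonsingular `e_M*`-isolated link intertwining the two matrices
    (hΛunit : IsUnit Λ.det)
    (hiso : ∀ e : Fin M, Λ e eM ≠ 0 ↔ e = eM)
    (hint : Λ * Pstar = Phat * Λ)
    -- initial distribution of `X*` (over the non-`e₀*` states)
    (νstar : Fin M → ℝ)
    (hν_nonneg : ∀ e, 0 ≤ νstar e) (hν_sum : ∑ e, νstar e ≤ 1)
    (νhat : Fin M → ℝ) (hνhat : νhat = νstar ᵥ* Λ⁻¹) :
    ∀ t : ℕ, (νstar ᵥ* Pstar ^ t) eM = Λ eM eM * ∑ e, νhat e * (Phat ^ t) e eM := by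
  intro t
  have hcomm : Phat ^ t * Λ = Λ * Pstar ^ t := by
    induction t with
    | zero => simp
    | succ n ih =>
      rw [pow_succ, pow_succ, Matrix.mul_assoc, ← hint, ← Matrix.mul_assoc, ih, Matrix.mul_assoc]
  have hν : νhat ᵥ* Λ = νstar := by
    rw [hνhat, Matrix.vecMul_vecMul, Matrix.nonsing_inv_mul _ hΛunit, Matrix.vecMul_one]
  have key : ∀ e : Fin M, (Phat ^ t * Λ) e eM = (Phat ^ t) e eM * Λ eM eM := by
    intro e
    rw [Matrix.mul_apply]
    refine Finset.sum_eq_single eM ?_ (by simp)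
    intro j _ hj
    have : Λ j eM = 0 := by
      by_contra h
      exact hj ((hiso j).mp h)
    simp [this]
  calc (νstar ᵥ* Pstar ^ t) eM = (νhat ᵥ* (Λ * (Pstar ^ t))) eM := by
        rw [← Matrix.vecMul_vecMul, hν]
      _ = (νhat ᵥ* (Phat ^ t * Λ)) eM := by rw [hcomm]
      _ = ∑ e, νhat e * ((Phat ^ t) e eM * Λ eM eM) := by
        simp only [Matrix.vecMul, dotProduct, key]
      _ = Λ eM eM * ∑ e, νhat e * (Phat ^ t) e eM := by
        rw [Finset.mul_sum]; apply Finset.sum_congr rfl; intro e _; ring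
end

section
/- Under the hypotheses of the intertwining lemma (Λ P'_{X*} = P_{X̂} Λ with Λ nonsingular and e_M*-isolated, ν̂ = ν* Λ⁻¹), the probability generating function of the absorption time satisfies pgf_{T*_{ν*, e_M*}}(s) = Λ(ê_M, e_M*) · Σ_{ê ∈ Ê} ν̂(ê) · pgf_{T̂_{ê, ê_M}}(s). -/
open Matrix

/-- Intertwining lemma for the probability generating function of the absorption time.
With `P(T* = k) = P(T* ≤ k) − P(T* ≤ k−1)` (and similarly for `T̂`), under the
intertwining hypotheses one has
`pgf_{T*_{ν*,e_M*}}(s) = Λ(ê_M,e_M*) · Σ_ê ν̂(ê) pgf_{T̂_{ê,ê_M}}(s)`. -/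
theorem intertwining_pgf (M : ℕ) (eM : Fin M)
    (Pstar Phat Λ : Matrix (Fin M) (Fin M) ℝ)
    (hPstar_nonneg : ∀ i j, 0 ≤ Pstar i j)
    (hPstar_row : ∀ i, ∑ j, Pstar i j ≤ 1)
    (hPstar_abs : ∀ j, Pstar eM j = if j = eM then 1 else 0)
    (hPhat_nonneg : ∀ i j, 0 ≤ Phat i j)
    (hPhat_row : ∀ i, ∑ j, Phat i j = 1)
    (hPhat_abs : ∀ j, Phat eM j = if j = eM then 1 else 0)
    (hΛunit : IsUnit Λ.det)
    (hiso : ∀ e : Fin M, Λ e eM ≠ 0 ↔ e = eM)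
    (hint : Λ * Pstar = Phat * Λ)
    (νstar : Fin M → ℝ)
    (hν_nonneg : ∀ e, 0 ≤ νstar e) (hν_sum : ∑ e, νstar e ≤ 1)
    (νhat : Fin M → ℝ) (hνhat : νhat = νstar ᵥ* Λ⁻¹)
    (s : ℝ) (hs0 : 0 ≤ s) (hs1 : s < 1) :
    (∑' k : ℕ, ((νstar ᵥ* Pstar ^ k) eM -
        (if k = 0 then 0 else (νstar ᵥ* Pstar ^ (k - 1)) eM)) * s ^ k) =
      Λ eM eM * ∑ e, νhat e *
        ∑' k : ℕ, ((Phat ^ k) e eM -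
          (if k = 0 then 0 else (Phat ^ (k - 1)) e eM)) * s ^ k := by
  -- entries of powers of Phat are nonnegative
  have hpow_nonneg : ∀ (k : ℕ) (i j : Fin M), 0 ≤ (Phat ^ k) i j := by
    intro k
    induction k with
    | zero =>
      intro i j
      rw [pow_zero]
      by_cases h : i = j <;> simp [Matrix.one_apply, h]
    | succ k ih =>
      intro i j
      rw [pow_succ, Matrix.mul_apply]
      exact Finset.sum_nonneg fun l _ => mul_nonneg (ih i l) (hPhat_nonneg l j)
  -- row sums of powers of Phat are one
  have hpow_row : ∀ (k : ℕ) (i : Fin M), ∑ j, (Phat ^ k) i j = 1 := by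
    intro k
    induction k with
    | zero => intro i; simp [Matrix.one_apply]
    | succ k ih =>
      intro i
      rw [pow_succ]
      simp only [Matrix.mul_apply]
      rw [Finset.sum_comm]
      calc ∑ l, ∑ j, (Phat ^ k) i l * Phat l j
          = ∑ l, (Phat ^ k) i l * ∑ j, Phat l j := by
            refine Finset.sum_congr rfl fun l _ => ?_
            rw [Finset.mul_sum]
        _ = ∑ l, (Phat ^ k) i l := by
            refine Finset.sum_congr rfl fun l _ => ?_
            rw [hPhat_row l, mul_one]
        _ = 1 := ih i
  have hpow_le : ∀ (k : ℕ) (i j : Fin M), (Phat ^ k) i j ≤ 1 := by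
    intro k i j
    calc (Phat ^ k) i j ≤ ∑ j', (Phat ^ k) i j' :=
          Finset.single_le_sum (fun l _ => hpow_nonneg k i l) (Finset.mem_univ j)
      _ = 1 := hpow_row k i
  -- intertwining for powers
  have hintk : ∀ k : ℕ, Λ * Pstar ^ k = Phat ^ k * Λ := by
    intro k
    induction k with
    | zero => simp
    | succ k ih =>
      rw [pow_succ, ← mul_assoc, ih, mul_assoc, hint, ← mul_assoc, ← pow_succ]
  -- recover νstar
  have hν : νstar = νhat ᵥ* Λ := by
    rw [hνhat, Matrix.vecMul_vecMul, Matrix.nonsing_inv_mul Λ hΛunit, Matrix.vecMul_one]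
  -- the key identity
  have key : ∀ k : ℕ, (νstar ᵥ* Pstar ^ k) eM = Λ eM eM * ∑ e, νhat e * (Phat ^ k) e eM := by
    intro k
    rw [hν, Matrix.vecMul_vecMul, hintk k, ← Matrix.vecMul_vecMul]
    have h1 : ((νhat ᵥ* Phat ^ k) ᵥ* Λ) eM = ∑ e, (νhat ᵥ* Phat ^ k) e * Λ e eM := by
      simp [Matrix.vecMul, dotProduct]
    rw [h1, Finset.sum_eq_single eM]
    · rw [mul_comm]
      congr 1
    · intro e _ he
      have h0 : Λ e eM = 0 := by
        by_contra h
        exact he ((hiso e).mp h)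
      rw [h0, mul_zero]
    · intro h
      exact absurd (Finset.mem_univ eM) h
  -- the summand functions
  set F : Fin M → ℕ → ℝ := fun e k =>
    νhat e * (((Phat ^ k) e eM - (if k = 0 then 0 else (Phat ^ (k - 1)) e eM)) * s ^ k)
    with hF
  have hg_summable : ∀ e : Fin M,
      Summable (fun k : ℕ =>
        ((Phat ^ k) e eM - (if k = 0 then 0 else (Phat ^ (k - 1)) e eM)) * s ^ k) := by
    intro e
    apply Summable.of_abs
    have hgeo : Summable (fun k : ℕ => 2 * s ^ k) :=
      (summable_geometric_of_lt_one hs0 hs1).mul_left 2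
    refine Summable.of_nonneg_of_le (fun k => abs_nonneg _) (fun k => ?_) hgeo
    rw [abs_mul, abs_pow, abs_of_nonneg hs0]
    have hb : |(Phat ^ k) e eM - (if k = 0 then 0 else (Phat ^ (k - 1)) e eM)| ≤ 2 := by
      have h1 : |(Phat ^ k) e eM| ≤ 1 := by
        rw [abs_of_nonneg (hpow_nonneg k e eM)]; exact hpow_le k e eM
      have h2 : |(if k = 0 then 0 else (Phat ^ (k - 1)) e eM)| ≤ 1 := by
        by_cases hk : k = 0
        · simp [hk]
        · rw [if_neg hk, abs_of_nonneg (hpow_nonneg (k - 1) e eM)]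
          exact hpow_le (k - 1) e eM
      calc |(Phat ^ k) e eM - (if k = 0 then 0 else (Phat ^ (k - 1)) e eM)|
          ≤ |(Phat ^ k) e eM| + |(if k = 0 then 0 else (Phat ^ (k - 1)) e eM)| :=
            abs_sub _ _
        _ ≤ 1 + 1 := add_le_add h1 h2
        _ = 2 := by norm_num
    exact mul_le_mul_of_nonneg_right hb (pow_nonneg hs0 k)
  have hF_summable : ∀ e : Fin M, Summable (fun k => Λ eM eM * F e k) := by
    intro e
    exact (((hg_summable e).mul_left (νhat e)).mul_left (Λ eM eM))
  -- term-by-term identity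
  have hterm : ∀ k : ℕ,
      ((νstar ᵥ* Pstar ^ k) eM - (if k = 0 then 0 else (νstar ᵥ* Pstar ^ (k - 1)) eM)) * s ^ k
        = ∑ e, Λ eM eM * F e k := by
    intro k
    by_cases hk : k = 0
    · subst hk
      rw [key 0, Finset.mul_sum]
      simp [hF]
    · simp only [if_neg hk, hF, key k, key (k - 1)]
      rw [eq_comm]
      calc ∑ e, Λ eM eM * (νhat e * (((Phat ^ k) e eM - (Phat ^ (k - 1)) e eM) * s ^ k))
          = ∑ e, (Λ eM eM * (νhat e * (Phat ^ k) e eM) * s ^ k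
              - Λ eM eM * (νhat e * (Phat ^ (k - 1)) e eM) * s ^ k) :=
            Finset.sum_congr rfl fun e _ => by ring
        _ = (Λ eM eM * ∑ e, νhat e * (Phat ^ k) e eM
              - Λ eM eM * ∑ e, νhat e * (Phat ^ (k - 1)) e eM) * s ^ k := by
            rw [Finset.sum_sub_distrib, ← Finset.sum_mul, ← Finset.sum_mul,
              ← Finset.mul_sum, ← Finset.mul_sum, ← sub_mul]
  -- put everything together
  have step1 : (∑' k : ℕ, ((νstar ᵥ* Pstar ^ k) eM -
      (if k = 0 then 0 else (νstar ᵥ* Pstar ^ (k - 1)) eM)) * s ^ k)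
      = ∑' k : ℕ, ∑ e, Λ eM eM * F e k := tsum_congr hterm
  rw [step1, Summable.tsum_finsetSum (fun e _ => hF_summable e), Finset.mul_sum]
  refine Finset.sum_congr rfl fun e _ => ?_
  simp only [hF]
  rw [tsum_mul_left, tsum_mul_left]
end
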